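/- arXiv:2107.00184 — 2 statements merged into one kernel-verified Lean document; each statement's English description precedes it below -/
import Mathlib

section
/- The DistMult scoring function is not fully expressive: there exists a {0,1}-valued tensor G over two entities and one relation (namely G with G_{1,1,2} = 1 and G_{2,1,1} = 0) such that for no dimension d and no embeddings h₁, h₂, r ∈ ℝ^d does ⟨h_i, r, h_j⟩ = G_{i,1,j} hold for all i, j ∈ {1,2}. -/
/-- DistMult is not fully expressive. -/
theorem distmult_not_fully_expressive :
    ∃ G : Fin 2 → Fin 2 → ℝ,
      (∀ i j, G i j = 0 ∨ G i j = 1) ∧ G 0 1 = 1 ∧ G 1 0 = 0 ∧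
      ¬ ∃ (d : ℕ) (e : Fin 2 → Fin d → ℝ) (r : Fin d → ℝ),
          ∀ i j, (∑ k, e i k * r k * e j k) = G i j := by
  refine ⟨fun i j => if i = 0 ∧ j = 1 then 1 else 0, ?_, by norm_num, by norm_num, ?_⟩
  · intro i j; by_cases h : i = 0 ∧ j = 1 <;> simp [h]
  · rintro ⟨d, e, r, h⟩
    have h01 := h 0 1
    have h10 := h 1 0
    have hsym : (∑ k, e 0 k * r k * e 1 k) = ∑ k, e 1 k * r k * e 0 k := by
      apply Finset.sum_congr rfl; intro k _; ring
    rw [h01, h10] at hsym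
    norm_num at hsym
end

section
/- Let A ∈ {0,±1,…,±K}^{K×K}. There exists a nonzero r ∈ ℝ^d with g_K(A, r) = 0 (equivalently, with hᵀ g_K(A,r) t = 0 for all h, t) if and only if there exists a value a ∈ {1,…,K} that does not occur among the absolute values {|A_ij| : i,j = 1,…,K}. -/
open Matrix

/-- The block matrix `g_K(A, r)` with chunk size `m`: its `(i,j)`-th `m × m` block is
`sign(A i j) • diag(r_{|A i j|})`, with the conventions `r_0 = 0`, `sign 0 = 0`.
A chunk index `k : Fin K` corresponds to the value `k + 1 ∈ {1,…,K}`. -/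
noncomputable def gK (K m : ℕ) (A : Fin K → Fin K → ℤ) (r : Fin K → Fin m → ℝ) :
    Matrix (Fin K × Fin m) (Fin K × Fin m) ℝ :=
  Matrix.of fun p q =>
    if p.2 = q.2 then
      ((A p.1 q.1).sign : ℝ) *
        (if h : (A p.1 q.1).natAbs - 1 < K then r ⟨(A p.1 q.1).natAbs - 1, h⟩ p.2 else 0)
    else 0

/-- There is a nonzero `r` with `g_K(A,r) = 0` iff some value `a ∈ {1,…,K}` does not
occur among the absolute values of the entries of `A`. -/
theorem gK_zero_iff_missing_value (K m : ℕ) (hm : 1 ≤ m) (A : Fin K → Fin K → ℤ)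
    (hA : ∀ i j, (A i j).natAbs ≤ K) :
    (∃ r : Fin K → Fin m → ℝ, r ≠ 0 ∧ gK K m A r = 0) ↔
    (∃ a : ℕ, 1 ≤ a ∧ a ≤ K ∧ ∀ i j, (A i j).natAbs ≠ a) := by
  constructor
  · rintro ⟨r, hr, hg⟩
    obtain ⟨k, p, hkp⟩ : ∃ k p, r k p ≠ 0 := by
      by_contra h; push_neg at h
      exact hr (funext fun k => funext fun p => h k p)
    refine ⟨(k : ℕ) + 1, le_add_self, by omega, fun i j hij => ?_⟩
    have h0 : A i j ≠ 0 := by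
      intro h0; rw [h0] at hij; simp at hij
    have hs : ((A i j).sign : ℝ) ≠ 0 := by
      simp [Int.sign_eq_zero_iff_zero, h0]
    have hentry := congrFun (congrFun hg (i, p)) (j, p)
    simp only [gK, Matrix.of_apply, Matrix.zero_apply, if_pos rfl] at hentry
    have hlt : (A i j).natAbs - 1 < K := by omega
    rw [dif_pos hlt] at hentry
    have hfin : (⟨(A i j).natAbs - 1, hlt⟩ : Fin K) = k := by
      apply Fin.ext; simp; omega
    rw [hfin] at hentry
    simp only [if_true] at hentry
    exact hkp ((mul_eq_zero.mp hentry).resolve_left hs)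
  · rintro ⟨a, ha1, haK, hmiss⟩
    have hk : a - 1 < K := by omega
    refine ⟨fun k p => if k = ⟨a - 1, hk⟩ then 1 else 0, ?_, ?_⟩
    · intro h
      have := congrFun (congrFun h ⟨a - 1, hk⟩) ⟨0, hm⟩
      simp at this
    · ext ⟨i, p⟩ ⟨j, q⟩
      simp only [gK, Matrix.of_apply, Matrix.zero_apply]
      by_cases hpq : p = q
      · rw [if_pos hpq]
        rcases eq_or_ne (A i j) 0 with h0 | h0
        · simp [h0]
        · have h1 : 1 ≤ (A i j).natAbs := Int.natAbs_pos.mpr h0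
          have hlt : (A i j).natAbs - 1 < K := by have := hA i j; omega
          have hne : (⟨(A i j).natAbs - 1, hlt⟩ : Fin K) ≠ ⟨a - 1, hk⟩ := by
            intro heq
            rw [Fin.mk_eq_mk] at heq
            exact hmiss i j (by omega)
          rw [dif_pos hlt, if_neg hne, mul_zero]
      · rw [if_neg hpq]
end
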